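/- arXiv:2010.03611 — 2 statements merged into one kernel-verified Lean document; each statement's English description precedes it below -/
import Mathlib

section
/- For every real number x with 0 < x ≤ π/2, cot(x) ≤ 1/x − x/3. -/
/-!
Up to the positive factor `x / sin x`, the inequality is `x cos x ≤ sin x (1 - x² / 3)`. Bounding
`cos x` above by its Taylor polynomial of degree 4 and `sin x` below by its Taylor polynomial of
degree 3 reduces this to `x - x³/2 + x⁵/24 ≤ (x - x³/6)(1 - x²/3)`, whose difference is `x⁵/72`;
the second bound may be multiplied by `1 - x²/3` because `x² ≤ 3` on `(0, π/2]`.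
-/

open Real

namespace Real

theorem cos_le_one_sub_sq_div_two_add_pow_four_div (x : ℝ) :
    cos x ≤ 1 - x ^ 2 / 2 + x ^ 4 / 24 := by
  wlog hx : 0 ≤ x
  · simpa [Even.neg_pow (by decide : Even 4)] using this (-x) (by linarith)
  let f (t : ℝ) : ℝ := 1 - t ^ 2 / 2 + t ^ 4 / 24 - cos t
  have hderiv (t : ℝ) : deriv f t = sin t - (t - t ^ 3 / 6) := by
    simp (disch := fun_prop) [f]
    ring
  have hmono : MonotoneOn f (Set.Ici 0) := by
    refine monotoneOn_of_deriv_nonneg (convex_Ici 0) (by fun_prop) (by fun_prop) fun t ht => ?_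
    rw [interior_Ici] at ht
    rw [hderiv]
    linarith [sin_ge_sub_cube ht.le]
  have := hmono Set.self_mem_Ici hx hx
  simp only [f, cos_zero] at this
  linarith

theorem mul_cos_le_sin_mul_one_sub_sq_div_three {x : ℝ} (hx0 : 0 ≤ x) (hx : x ^ 2 ≤ 3) :
    x * cos x ≤ sin x * (1 - x ^ 2 / 3) :=
  calc x * cos x ≤ x * (1 - x ^ 2 / 2 + x ^ 4 / 24) :=
        mul_le_mul_of_nonneg_left (cos_le_one_sub_sq_div_two_add_pow_four_div x) hx0
    _ ≤ (x - x ^ 3 / 6) * (1 - x ^ 2 / 3) := by nlinarith [pow_nonneg hx0 5]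
    _ ≤ sin x * (1 - x ^ 2 / 3) :=
        mul_le_mul_of_nonneg_right (sin_ge_sub_cube hx0) (by linarith)

theorem cos_div_sin_le_one_div_sub_div_three {x : ℝ} (hx0 : 0 < x) (hx : x ^ 2 ≤ 3) :
    cos x / sin x ≤ 1 / x - x / 3 := by
  have hsin : 0 < sin x := sin_pos_of_pos_of_lt_pi hx0 (by nlinarith [pi_gt_three])
  rw [div_le_iff₀ hsin]
  calc cos x ≤ sin x * (1 - x ^ 2 / 3) / x := by
        rw [le_div_iff₀ hx0, mul_comm]
        exact mul_cos_le_sin_mul_one_sub_sq_div_three hx0.le hx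
    _ = (1 / x - x / 3) * sin x := by field_simp

end Real

theorem cot_le_taylor (x : ℝ) (hx0 : 0 < x) (hx : x ≤ Real.pi / 2) :
    Real.cos x / Real.sin x ≤ 1 / x - x / 3 :=
  cos_div_sin_le_one_div_sub_div_three hx0 (by nlinarith [pi_lt_d2])
end

section
/- For every integer α ≥ 3, α·cot(π/α) ≤ α²/π − π/3. -/
/-! With `x = π / α ∈ (0, π)` the claim is `cot x ≤ 1 / x - x / 3`, i.e.
`x cos x ≤ (1 - x² / 3) sin x`. The difference of the two sides vanishes at `0` and has derivative
`x (sin x - x cos x) / 3`, which is nonnegative on `[0, π]` because `sin x - x cos x` itself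
vanishes at `0` and has derivative `x sin x ≥ 0` there. -/

open Real Set

lemma monotoneOn_Icc_of_hasDerivAt_nonneg {f f' : ℝ → ℝ} {a b : ℝ}
    (hf : ∀ y, HasDerivAt f (f' y) y) (hf' : ∀ y ∈ Ioo a b, 0 ≤ f' y) : MonotoneOn f (Icc a b) :=
  monotoneOn_of_hasDerivWithinAt_nonneg (convex_Icc a b)
    (fun y _ ↦ (hf y).continuousAt.continuousWithinAt) (fun y _ ↦ (hf y).hasDerivWithinAt)
    (fun y hy ↦ hf' y (by rwa [interior_Icc] at hy))

namespace Real

lemma mul_cos_le_sin {x : ℝ} (h0 : 0 ≤ x) (hπ : x ≤ π) : x * cos x ≤ sin x := by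
  have hderiv (y : ℝ) : HasDerivAt (fun y ↦ sin y - y * cos y) (y * sin y) y := by
    refine ((hasDerivAt_sin y).sub ((hasDerivAt_id' y).mul (hasDerivAt_cos y))).congr_deriv ?_
    ring
  have hmono := monotoneOn_Icc_of_hasDerivAt_nonneg hderiv
    (fun y hy ↦ mul_nonneg hy.1.le (sin_nonneg_of_nonneg_of_le_pi hy.1.le hy.2.le))
  have hval := hmono ⟨le_rfl, pi_pos.le⟩ ⟨h0, hπ⟩ h0
  simp only [sin_zero, cos_zero, zero_mul, sub_zero] at hval
  linarith

lemma mul_cos_le_one_sub_sq_div_three_mul_sin {x : ℝ} (h0 : 0 ≤ x) (hπ : x ≤ π) :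
    x * cos x ≤ (1 - x ^ 2 / 3) * sin x := by
  have hderiv (y : ℝ) : HasDerivAt (fun y ↦ (1 - y ^ 2 / 3) * sin y - y * cos y)
      (y / 3 * (sin y - y * cos y)) y := by
    refine ((((hasDerivAt_pow 2 y).div_const 3).const_sub 1 |>.mul (hasDerivAt_sin y)).sub
      ((hasDerivAt_id' y).mul (hasDerivAt_cos y))).congr_deriv ?_
    ring
  have hmono := monotoneOn_Icc_of_hasDerivAt_nonneg hderiv fun y hy ↦
    mul_nonneg (div_nonneg hy.1.le zero_le_three) (sub_nonneg.2 (mul_cos_le_sin hy.1.le hy.2.le))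
  have hval := hmono ⟨le_rfl, pi_pos.le⟩ ⟨h0, hπ⟩ h0
  simp only [sin_zero, cos_zero, mul_zero, zero_mul, sub_zero] at hval
  linarith

lemma cot_le_inv_sub_div_three {x : ℝ} (h0 : 0 < x) (hπ : x < π) : cot x ≤ x⁻¹ - x / 3 := by
  have hsin : 0 < sin x := sin_pos_of_pos_of_lt_pi h0 hπ
  rw [cot_eq_cos_div_sin, div_le_iff₀ hsin, ← mul_le_mul_iff_of_pos_left h0]
  calc x * cos x ≤ (1 - x ^ 2 / 3) * sin x := mul_cos_le_one_sub_sq_div_three_mul_sin h0.le hπ.le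
    _ = x * ((x⁻¹ - x / 3) * sin x) := by field_simp

end Real

theorem alpha_cot_even_bound (α : ℤ) (hα : 3 ≤ α) :
    (α : ℝ) * (Real.cos (Real.pi / α) / Real.sin (Real.pi / α)) ≤
      (α : ℝ) ^ 2 / Real.pi - Real.pi / 3 := by
  have hα1 : (1 : ℝ) < α := by exact_mod_cast (by omega : 1 < α)
  have hαpos : (0 : ℝ) < α := by linarith
  have hcot := cot_le_inv_sub_div_three (div_pos pi_pos hαpos) (div_lt_self pi_pos hα1)
  rw [← cot_eq_cos_div_sin]
  calc (α : ℝ) * cot (π / α) ≤ α * ((π / α)⁻¹ - π / α / 3) := by gcongr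
    _ = α ^ 2 / π - π / 3 := by field_simp
end
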